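/- Define, for a ∈ 𝒜 and a word w = w_1⋯w_k, the conditional word probability P_a(w) = P(w_1|a) ∏_{i=1}^{k−1} P(w_{i+1}|w_i), with P_a(ε) = 1, and set t_{a,n} = ∑_{w∈𝒜^*} [1 − (1−P_a(w))^n − n P_a(w)(1−P_a(w))^{n−1}] (the average size of a trie built from n independent sequences from the source all started at state a). Then the average trie size t_n = ∑_{w∈𝒜^*} [1 − (1−P(w))^n − n P(w)(1−P(w))^{n−1}] satisfies, for every n ≥ 2, the recurrence t_n = 1 + ∑_{a∈𝒜} ∑_{k=0}^{n} C(n,k) π_a^k (1−π_a)^{n−k} t_{a,k}, and likewise for every b ∈ 𝒜 and n ≥ 2, t_{b,n} = 1 + ∑_{a∈𝒜} ∑_{k=0}^{n} C(n,k) P(a|b)^k (1−P(a|b))^{n−k} t_{a,k}. -/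

import Mathlib

/-- `chainProb P b w` is the probability `P_b(w)` of emitting the word `w` when the
Markov source with transition probabilities `P a b = P(a|b)` is started from state `b`:
`P_b(w) = P(w_1|b) ∏_{i=1}^{k-1} P(w_{i+1}|w_i)`, with `P_b(ε) = 1`. -/
def chainProb {A : Type*} (P : A → A → ℝ) : A → List A → ℝ
  | _, [] => 1
  | b, a :: w => P a b * chainProb P a w

/-- `wordProb π P w` is the stationary probability `P(w)` of the word `w`. -/
def wordProb {A : Type*} (π : A → ℝ) (P : A → A → ℝ) : List A → ℝ
  | [] => 1
  | a :: w => π a * chainProb P a w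

/-- The summand `1 - (1-p)^n - n p (1-p)^{n-1}` of the average trie size. -/
def trieSummand (n : ℕ) (p : ℝ) : ℝ :=
  1 - (1 - p) ^ n - n * p * (1 - p) ^ (n - 1)

/-!
A word `w` is an internal node of the trie of `n` sequences iff at least two of them start
with `w`, which happens with probability `trieSummand n P(w)`. The empty word gives the root,
and for `w = a w'` we have `P(w) = π_a P_a(w')`: conditioning on the number `k` of sequences
that start with `a` (binomial thinning, `trieSummand_mul`) and summing over `w'` gives `t_{a,k}`.
The series converge because `trieSummand n p ≤ 2^n p^2` and the words of length `m` carry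
`∑ P_b(w)^2 ≤ c^m`, where `c < 1` bounds the collision probabilities `∑_a P(a|b)^2`.
-/

open Finset

theorem binomial_sum_mul_one_sub_pow (n : ℕ) (p q : ℝ) :
    ∑ k ∈ range (n + 1), (n.choose k : ℝ) * p ^ k * (1 - p) ^ (n - k) * (1 - q) ^ k
      = (1 - p * q) ^ n := by
  rw [show 1 - p * q = p * (1 - q) + (1 - p) by ring, add_pow]
  exact sum_congr rfl fun k _ => by rw [mul_pow]; ring

theorem binomial_sum_eq_one (n : ℕ) (p : ℝ) :
    ∑ k ∈ range (n + 1), (n.choose k : ℝ) * p ^ k * (1 - p) ^ (n - k) = 1 := by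
  simpa using binomial_sum_mul_one_sub_pow n p 0

theorem binomial_sum_mul_mul_one_sub_pow (n : ℕ) (p q : ℝ) :
    ∑ k ∈ range (n + 1), (n.choose k : ℝ) * p ^ k * (1 - p) ^ (n - k) * (k * q * (1 - q) ^ (k - 1))
      = n * (p * q) * (1 - p * q) ^ (n - 1) := by
  cases n with
  | zero => simp
  | succ m =>
    have hterm (i : ℕ) (_ : i ∈ range (m + 1)) :
        ((m + 1).choose (i + 1) : ℝ) * p ^ (i + 1) * (1 - p) ^ (m + 1 - (i + 1))
            * ((i + 1 : ℕ) * q * (1 - q) ^ (i + 1 - 1))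
          = (m + 1) * (p * q) * ((m.choose i : ℝ) * p ^ i * (1 - p) ^ (m - i) * (1 - q) ^ i) := by
      have hchoose : ((m + 1).choose (i + 1) : ℝ) * (i + 1) = (m + 1) * m.choose i := by
        exact_mod_cast (Nat.add_one_mul_choose_eq m i).symm
      rw [Nat.add_sub_add_right, Nat.add_sub_cancel, pow_succ]
      push_cast
      linear_combination p ^ i * p * (1 - p) ^ (m - i) * q * (1 - q) ^ i * hchoose
    rw [sum_range_succ', sum_congr rfl hterm, ← mul_sum, binomial_sum_mul_one_sub_pow]
    simp

theorem trieSummand_mul (n : ℕ) (p q : ℝ) :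
    trieSummand n (p * q) = ∑ k ∈ range (n + 1),
      (n.choose k : ℝ) * p ^ k * (1 - p) ^ (n - k) * trieSummand k q := by
  simp only [trieSummand, mul_sub, mul_one, sum_sub_distrib, binomial_sum_eq_one,
    binomial_sum_mul_one_sub_pow, binomial_sum_mul_mul_one_sub_pow]

theorem trieSummand_one (k : ℕ) : trieSummand k 1 = if k ≤ 1 then 0 else 1 := by
  match k with
  | 0 | 1 => norm_num [trieSummand]
  | k + 2 => simp [trieSummand]

theorem trieSummand_eq_sum_binomial (n : ℕ) (p : ℝ) :
    trieSummand n p = ∑ k ∈ range (n + 1),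
      (n.choose k : ℝ) * p ^ k * (1 - p) ^ (n - k) * if k ≤ 1 then 0 else 1 := by
  simpa [trieSummand_one] using trieSummand_mul n p 1

theorem trieSummand_nonneg {p : ℝ} (hp0 : 0 ≤ p) (hp1 : p ≤ 1) (n : ℕ) :
    0 ≤ trieSummand n p := by
  rw [trieSummand_eq_sum_binomial]
  refine sum_nonneg fun k _ => ?_
  have : 0 ≤ 1 - p := by linarith
  split_ifs <;> positivity

theorem trieSummand_le_two_pow_mul_sq {p : ℝ} (hp0 : 0 ≤ p) (hp1 : p ≤ 1) (n : ℕ) :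
    trieSummand n p ≤ 2 ^ n * p ^ 2 := by
  have hterm (k : ℕ) : (n.choose k : ℝ) * p ^ k * (1 - p) ^ (n - k) * (if k ≤ 1 then 0 else 1)
      ≤ n.choose k * p ^ 2 := by
    split_ifs with hk
    · rw [mul_zero]; positivity
    · rw [mul_one, mul_assoc]
      gcongr
      have h1p : 0 ≤ 1 - p := by linarith
      calc p ^ k * (1 - p) ^ (n - k) ≤ p ^ 2 * 1 :=
            mul_le_mul (pow_le_pow_of_le_one hp0 hp1 (by omega)) (pow_le_one₀ h1p (by linarith))
              (by positivity) (by positivity)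
        _ = p ^ 2 := mul_one _
  rw [trieSummand_eq_sum_binomial]
  calc _ ≤ ∑ k ∈ range (n + 1), (n.choose k : ℝ) * p ^ 2 := sum_le_sum fun k _ => hterm k
    _ = 2 ^ n * p ^ 2 := by rw [← sum_mul, ← Nat.cast_sum, Nat.sum_range_choose]; push_cast; rfl

section
variable {A M : Type*}

theorem hasSum_list_of_hasSum_cons [Fintype A] [AddCommMonoid M] [TopologicalSpace M]
    [ContinuousAdd M] {f : List A → M} {T : A → M} (h : ∀ a, HasSum (fun w => f (a :: w)) (T a)) :
    HasSum f (f [] + ∑ a, T a) := by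
  classical
  have hfiber (a : A) : HasSum (fun w => if w.head? = some a then f w else 0) (T a) := by
    rw [← (List.cons_injective (a := a)).hasSum_iff]
    · simpa [Function.comp_def] using h a
    · rintro (_ | ⟨b, w⟩) hw
      · rfl
      · have hba : b ≠ a := by rintro rfl; exact hw ⟨w, rfl⟩
        simp [hba]
  convert (hasSum_ite_eq [] (f [])).add (hasSum_sum fun a _ => hfiber a) with w
  rcases w with _ | ⟨b, w⟩ <;> simp

theorem sum_ofFn_succ [Fintype A] [AddCommMonoid M] (F : List A → M) (m : ℕ) :
    ∑ v : Fin (m + 1) → A, F (List.ofFn v) = ∑ a, ∑ v : Fin m → A, F (a :: List.ofFn v) := by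
  rw [← (Fin.consEquiv fun _ => A).sum_comp, Fintype.sum_prod_type]
  simp [List.ofFn_succ]

theorem summable_of_sum_ofFn_le [Fintype A] {g : List A → ℝ} (hg : ∀ w, 0 ≤ g w) {c : ℝ}
    (hc0 : 0 ≤ c) (hc1 : c < 1) (h : ∀ m, ∑ v : Fin m → A, g (List.ofFn v) ≤ c ^ m) :
    Summable g := by
  rw [← List.equivSigmaTuple.symm.summable_iff]
  refine (summable_sigma_of_nonneg fun _ => hg _).2 ⟨fun _ => .of_finite, ?_⟩
  refine (summable_geometric_of_lt_one hc0 hc1).of_nonneg_of_le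
    (fun _ => tsum_nonneg fun _ => hg _) fun m => ?_
  rw [tsum_fintype]
  exact h m

theorem chainProb_nonneg {P : A → A → ℝ} (hP0 : ∀ a b, 0 ≤ P a b) :
    ∀ b w, 0 ≤ chainProb P b w
  | _, [] => zero_le_one
  | b, a :: w => mul_nonneg (hP0 a b) (chainProb_nonneg hP0 a w)

theorem chainProb_le_one {P : A → A → ℝ} (hP0 : ∀ a b, 0 ≤ P a b) (hP1 : ∀ a b, P a b ≤ 1) :
    ∀ b w, chainProb P b w ≤ 1
  | _, [] => le_rfl
  | b, a :: w => mul_le_one₀ (hP1 a b) (chainProb_nonneg hP0 a w) (chainProb_le_one hP0 hP1 a w)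

theorem sum_sq_lt_one [Fintype A] (hcard : 2 ≤ Fintype.card A) {p : A → ℝ}
    (hpos : ∀ a, 0 < p a) (hsum : ∑ a, p a = 1) : ∑ a, p a ^ 2 < 1 := by
  classical
  have hlt (a : A) : p a ^ 2 < p a := by
    obtain ⟨a', ha'⟩ := Fintype.exists_ne_of_one_lt_card (by omega) a
    have : p a + p a' ≤ 1 := by
      rw [← hsum, ← sum_pair ha'.symm]
      exact sum_le_sum_of_subset_of_nonneg (subset_univ _) fun x _ _ => (hpos x).le
    nlinarith [hpos a, hpos a']
  have : Nonempty A := Fintype.card_pos_iff.mp (by omega)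
  calc ∑ a, p a ^ 2 < ∑ a, p a := sum_lt_sum_of_nonempty univ_nonempty fun a _ => hlt a
    _ = 1 := hsum

theorem sum_chainProb_sq_ofFn_le [Fintype A] {P : A → A → ℝ} {c : ℝ} (hc0 : 0 ≤ c)
    (hcoll : ∀ b, ∑ a, P a b ^ 2 ≤ c) :
    ∀ m b, ∑ v : Fin m → A, chainProb P b (List.ofFn v) ^ 2 ≤ c ^ m
  | 0, b => by simp [chainProb]
  | m + 1, b =>
    calc ∑ v : Fin (m + 1) → A, chainProb P b (List.ofFn v) ^ 2
        = ∑ a, P a b ^ 2 * ∑ v : Fin m → A, chainProb P a (List.ofFn v) ^ 2 := by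
          rw [sum_ofFn_succ fun w => chainProb P b w ^ 2]
          simp only [chainProb, mul_pow, mul_sum]
      _ ≤ ∑ a, P a b ^ 2 * c ^ m := by
          gcongr with a
          exact sum_chainProb_sq_ofFn_le hc0 hcoll m a
      _ ≤ c ^ (m + 1) := by
          rw [← sum_mul, pow_succ']
          gcongr
          exact hcoll b

theorem summable_trieSummand_chainProb [Fintype A] {P : A → A → ℝ} (hP0 : ∀ a b, 0 ≤ P a b)
    (hP1 : ∀ a b, P a b ≤ 1) {c : ℝ} (hc0 : 0 ≤ c) (hc1 : c < 1)
    (hcoll : ∀ b, ∑ a, P a b ^ 2 ≤ c) (b : A) (n : ℕ) :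
    Summable fun w => trieSummand n (chainProb P b w) := by
  have hsq : Summable fun w => chainProb P b w ^ 2 :=
    summable_of_sum_ofFn_le (fun _ => sq_nonneg _) hc0 hc1
      fun m => sum_chainProb_sq_ofFn_le hc0 hcoll m b
  refine (hsq.mul_left (2 ^ n)).of_nonneg_of_le (fun w => ?_) fun w => ?_
  · exact trieSummand_nonneg (chainProb_nonneg hP0 b w) (chainProb_le_one hP0 hP1 b w) n
  · exact trieSummand_le_two_pow_mul_sq (chainProb_nonneg hP0 b w)
      (chainProb_le_one hP0 hP1 b w) n

theorem hasSum_trieSummand_of_cons [Fintype A] (P : A → A → ℝ) (f : A → ℝ) {g : List A → ℝ}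
    (hg_nil : g [] = 1) (hg_cons : ∀ a w, g (a :: w) = f a * chainProb P a w)
    {T : A → ℕ → ℝ} (hT : ∀ a k, HasSum (fun w => trieSummand k (chainProb P a w)) (T a k))
    {n : ℕ} (hn : 2 ≤ n) :
    HasSum (fun w => trieSummand n (g w)) (1 + ∑ a, ∑ k ∈ range (n + 1),
      (n.choose k : ℝ) * f a ^ k * (1 - f a) ^ (n - k) * T a k) := by
  have hroot : trieSummand n (g []) = 1 := by
    rw [hg_nil, trieSummand_one, if_neg (by omega)]
  have hsplit := hasSum_list_of_hasSum_cons (f := fun w => trieSummand n (g w)) fun a => by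
    simp only [hg_cons, trieSummand_mul]
    exact hasSum_sum fun k _ => (hT a k).mul_left _
  rwa [hroot] at hsplit

end

theorem trie_size_recurrence_general
    {A : Type*} [Fintype A]
    (hcard : 2 ≤ Fintype.card A)
    (P : A → A → ℝ) (π : A → ℝ)
    (hPpos : ∀ a b, 0 < P a b)
    (hProw : ∀ b, ∑ a, P a b = 1)
    (t : ℕ → ℝ)
    (ht : ∀ n, t n = ∑' w : List A, trieSummand n (wordProb π P w))
    (ta : A → ℕ → ℝ)
    (hta : ∀ a n, ta a n = ∑' w : List A, trieSummand n (chainProb P a w)) :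
    ∀ n : ℕ, 2 ≤ n →
      (t n = 1 + ∑ a : A, ∑ k ∈ Finset.range (n + 1),
        (n.choose k : ℝ) * π a ^ k * (1 - π a) ^ (n - k) * ta a k) ∧
      (∀ b : A, ta b n = 1 + ∑ a : A, ∑ k ∈ Finset.range (n + 1),
        (n.choose k : ℝ) * P a b ^ k * (1 - P a b) ^ (n - k) * ta a k) := by
  have : Nonempty A := Fintype.card_pos_iff.mp (by omega)
  have hP0 (a b : A) : 0 ≤ P a b := (hPpos a b).le
  have hP1 (a b : A) : P a b ≤ 1 :=
    hProw b ▸ single_le_sum (fun x _ => hP0 x b) (mem_univ a)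
  obtain ⟨b₀, hb₀⟩ := Finite.exists_max fun b => ∑ a, P a b ^ 2
  have hc0 : 0 ≤ ∑ a, P a b₀ ^ 2 := by positivity
  have hc1 : ∑ a, P a b₀ ^ 2 < 1 := sum_sq_lt_one hcard (hPpos · b₀) (hProw b₀)
  have hT (a : A) (k : ℕ) : HasSum (fun w => trieSummand k (chainProb P a w)) (ta a k) :=
    hta a k ▸ (summable_trieSummand_chainProb hP0 hP1 hc0 hc1 hb₀ a k).hasSum
  intro n hn
  exact ⟨(ht n).trans (hasSum_trieSummand_of_cons P π rfl (fun _ _ => rfl) hT hn).tsum_eq,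
    fun b => (hta b n).trans
      (hasSum_trieSummand_of_cons P (P · b) rfl (fun _ _ => rfl) hT hn).tsum_eq⟩

/-- The recurrences for the average trie size: with `t_{a,n}` the average size of a trie
built from `n` independent sequences all started at state `a`, for every `n ≥ 2`,
`t_n = 1 + ∑_a ∑_{k=0}^n C(n,k) π_a^k (1-π_a)^{n-k} t_{a,k}` and
`t_{b,n} = 1 + ∑_a ∑_{k=0}^n C(n,k) P(a|b)^k (1-P(a|b))^{n-k} t_{a,k}`. -/
theorem trie_size_recurrence
    {A : Type*} [Fintype A]
    (hcard : 2 ≤ Fintype.card A)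
    (P : A → A → ℝ) (π : A → ℝ)
    (hPpos : ∀ a b, 0 < P a b)
    (hProw : ∀ b, ∑ a, P a b = 1)
    (hπpos : ∀ a, 0 < π a)
    (hπsum : ∑ a, π a = 1)
    (hπstat : ∀ a, ∑ b, π b * P a b = π a)
    (t : ℕ → ℝ)
    (ht : ∀ n, t n = ∑' w : List A, trieSummand n (wordProb π P w))
    (ta : A → ℕ → ℝ)
    (hta : ∀ a n, ta a n = ∑' w : List A, trieSummand n (chainProb P a w)) :
    ∀ n : ℕ, 2 ≤ n →
      (t n = 1 + ∑ a : A, ∑ k ∈ Finset.range (n + 1),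
        (n.choose k : ℝ) * π a ^ k * (1 - π a) ^ (n - k) * ta a k) ∧
      (∀ b : A, ta b n = 1 + ∑ a : A, ∑ k ∈ Finset.range (n + 1),
        (n.choose k : ℝ) * P a b ^ k * (1 - P a b) ^ (n - k) * ta a k) :=
  trie_size_recurrence_general hcard P π hPpos hProw t ht ta hta
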